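/- Let L be an n×n Laplacian matrix with eigenprojection J̄ = L^⊢, let v ∈ ℝⁿ be a distribution vector, let V = 1vᵀ and D = I − V, and let δ > 0. Then: (1) the eigenprojection of L + δD equals 1·vᵀ(I + δ⁻¹L)⁻¹; and (2) as δ → 0⁺, the eigenprojection of L + δD converges to 1·vᵀJ̄. -/

import Mathlib

/-!
For `δ > 0` the matrix `M = L + δD` factors as `δ (I + δ⁻¹L) D`, where `I + δ⁻¹L` is strictly
diagonally dominant, hence invertible, and `D = I - 1vᵀ` has kernel `span {1}` because
`v ⬝ 1 = 1`. The row vector `wᵀ = vᵀ(I + δ⁻¹L)⁻¹` satisfies `wᵀM = 0` and `w ⬝ 1 = 1`, so `1wᵀ`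
is an idempotent with range `ker M` that kills `range M`; such an idempotent is the
eigenprojection.

For the limit, `L` has index at most one: for small `s > 0` the matrix `P = I - sL` is row
stochastic, and `L (L x) = 0` would give `Pᵏ x = x - k s L x`, unbounded unless `L x = 0`.
Hence `L J̄ = J̄ L = 0` and `L + J̄` is invertible, and
`(I + ε⁻¹L)⁻¹ = J̄ + ε (I - J̄)(εI + L + J̄)⁻¹ → J̄`.
-/

open Matrix Filter Topology

/-- The index of a square real matrix: the smallest `k` with
`rank (A^(k+1)) = rank (A^k)`. -/
noncomputable def matIndex {m : Type*} [Fintype m] [DecidableEq m]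
    (A : Matrix m m ℝ) : ℕ :=
  sInf {k : ℕ | (A ^ (k + 1)).rank = (A ^ k).rank}

/-- `Q` is the eigenprojection of `A` corresponding to the eigenvalue `0`:
an idempotent matrix whose range is the null space of `A ^ ind A` and whose
null space is the range of `A ^ ind A`. -/
def IsEigenprojection {m : Type*} [Fintype m] [DecidableEq m]
    (A Q : Matrix m m ℝ) : Prop :=
  Q * Q = Q ∧
  LinearMap.range Q.mulVecLin = LinearMap.ker (A ^ matIndex A).mulVecLin ∧
  LinearMap.ker Q.mulVecLin = LinearMap.range (A ^ matIndex A).mulVecLin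

/-- A Laplacian matrix: nonpositive off-diagonal entries and zero row sums. -/
def IsLaplacian {m : Type*} [Fintype m] (L : Matrix m m ℝ) : Prop :=
  (∀ i j, i ≠ j → L i j ≤ 0) ∧ ∀ i, ∑ j, L i j = 0

theorem Matrix.rank_eq_of_ker_mulVecLin_eq {m K : Type*} [Fintype m] [Field K]
    {A B : Matrix m m K} (h : LinearMap.ker A.mulVecLin = LinearMap.ker B.mulVecLin) :
    A.rank = B.rank := by
  have hA := LinearMap.finrank_range_add_finrank_ker A.mulVecLin
  have hB := LinearMap.finrank_range_add_finrank_ker B.mulVecLin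
  rw [h] at hA
  exact Nat.add_right_cancel (hA.trans hB.symm)

section Index

variable {m : Type*} [Fintype m] {A Q : Matrix m m ℝ}

theorem ker_pow_matIndex_and_range_pow_matIndex [DecidableEq m]
    (h : LinearMap.ker (A * A).mulVecLin = LinearMap.ker A.mulVecLin) :
    LinearMap.ker (A ^ matIndex A).mulVecLin = LinearMap.ker A.mulVecLin ∧
      LinearMap.range (A ^ matIndex A).mulVecLin = LinearMap.range A.mulVecLin := by
  have hone : 1 ∈ {k : ℕ | (A ^ (k + 1)).rank = (A ^ k).rank} := by
    simpa [sq] using Matrix.rank_eq_of_ker_mulVecLin_eq h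
  rcases Nat.le_one_iff_eq_zero_or_eq_one.1 (Nat.sInf_le hone) with h0 | h1
  · have hrank : A.rank = Fintype.card m := by
      simpa [h0] using Nat.sInf_mem ⟨1, hone⟩
    have hnullity := LinearMap.finrank_range_add_finrank_ker A.mulVecLin
    rw [← Matrix.rank, hrank, Module.finrank_fintype_fun_eq_card] at hnullity
    have hker : LinearMap.ker A.mulVecLin = ⊥ :=
      Submodule.finrank_eq_zero.1 (by omega)
    have hrange : LinearMap.range A.mulVecLin = ⊤ := Submodule.eq_top_of_finrank_eq <| by
      rw [← Matrix.rank, hrank, Module.finrank_fintype_fun_eq_card]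
    simp [matIndex, h0, hker, hrange]
  · simp [matIndex, h1]

theorem isEigenprojection_iff_of_ker_mul_self [DecidableEq m]
    (h : LinearMap.ker (A * A).mulVecLin = LinearMap.ker A.mulVecLin) :
    IsEigenprojection A Q ↔ Q * Q = Q ∧
      LinearMap.range Q.mulVecLin = LinearMap.ker A.mulVecLin ∧
      LinearMap.ker Q.mulVecLin = LinearMap.range A.mulVecLin := by
  obtain ⟨hker, hrange⟩ := ker_pow_matIndex_and_range_pow_matIndex h
  rw [IsEigenprojection, hker, hrange]

theorem ker_mul_self_of_range_eq_ker (hQQ : Q * Q = Q)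
    (hrange : LinearMap.range Q.mulVecLin = LinearMap.ker A.mulVecLin)
    (hle : LinearMap.range A.mulVecLin ≤ LinearMap.ker Q.mulVecLin) :
    LinearMap.ker (A * A).mulVecLin = LinearMap.ker A.mulVecLin := by
  refine le_antisymm (fun x hx => ?_) ?_
  · obtain ⟨y, hy⟩ : A *ᵥ x ∈ LinearMap.range Q.mulVecLin := by
      rw [hrange, LinearMap.mem_ker]
      simpa [Matrix.mulVec_mulVec] using hx
    have hQAx : Q *ᵥ (A *ᵥ x) = 0 := hle ⟨x, rfl⟩
    simp only [Matrix.mulVecLin_apply] at hy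
    rw [LinearMap.mem_ker, Matrix.mulVecLin_apply, ← hy, ← hQAx, ← hy, Matrix.mulVec_mulVec,
      hQQ]
  · rw [Matrix.mulVecLin_mul]
    exact LinearMap.ker_le_ker_comp _ _

theorem isEigenprojection_of_range_eq_ker [DecidableEq m] (hQQ : Q * Q = Q)
    (hrange : LinearMap.range Q.mulVecLin = LinearMap.ker A.mulVecLin)
    (hle : LinearMap.range A.mulVecLin ≤ LinearMap.ker Q.mulVecLin) :
    IsEigenprojection A Q := by
  refine (isEigenprojection_iff_of_ker_mul_self
    (ker_mul_self_of_range_eq_ker hQQ hrange hle)).2 ⟨hQQ, hrange, ?_⟩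
  refine (Submodule.eq_of_le_of_finrank_eq hle ?_).symm
  have hA := LinearMap.finrank_range_add_finrank_ker A.mulVecLin
  have hQ := LinearMap.finrank_range_add_finrank_ker Q.mulVecLin
  rw [hrange] at hQ
  omega

theorem isEigenprojection_vecMulVec [DecidableEq m] {u w : m → ℝ} (hwu : w ⬝ᵥ u = 1)
    (hwA : w ᵥ* A = 0)
    (hker : LinearMap.ker A.mulVecLin = Submodule.span ℝ {u}) :
    IsEigenprojection A (Matrix.vecMulVec u w) := by
  have hQ : ∀ x, Matrix.vecMulVec u w *ᵥ x = (w ⬝ᵥ x) • u := fun x => by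
    simp [Matrix.vecMulVec_mulVec]
  refine isEigenprojection_of_range_eq_ker ?_ ?_ ?_
  · rw [Matrix.vecMulVec_mul, Matrix.vecMul_vecMulVec, hwu, one_smul]
  · refine hker ▸ le_antisymm ?_ ?_
    · rintro _ ⟨x, rfl⟩
      exact Submodule.mem_span_singleton.2 ⟨w ⬝ᵥ x, (hQ x).symm⟩
    · exact (Submodule.span_singleton_le_iff_mem _ _).2 ⟨u, by simp [hQ, hwu]⟩
  · rintro _ ⟨x, rfl⟩
    simp [hQ, Matrix.dotProduct_mulVec, hwA]

theorem Matrix.mul_eq_zero_of_range_le_ker {l n : Type*} [Fintype n] {B : Matrix l m ℝ}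
    {C : Matrix m n ℝ} (h : LinearMap.range C.mulVecLin ≤ LinearMap.ker B.mulVecLin) :
    B * C = 0 :=
  Matrix.ext_iff_mulVec.2 fun x => by
    simpa [Matrix.mulVec_mulVec] using h ⟨x, rfl⟩

theorem isUnit_det_add_of_range_eq_ker [DecidableEq m] (hQQ : Q * Q = Q)
    (hrange : LinearMap.range Q.mulVecLin = LinearMap.ker A.mulVecLin)
    (hker : LinearMap.ker Q.mulVecLin = LinearMap.range A.mulVecLin) :
    IsUnit (A + Q).det := by
  rw [isUnit_iff_ne_zero, Ne, ← Matrix.exists_mulVec_eq_zero_iff]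
  rintro ⟨x, hx0, hx⟩
  rw [Matrix.add_mulVec] at hx
  have hQA : Q * A = 0 := Matrix.mul_eq_zero_of_range_le_ker hker.ge
  have hQx : Q *ᵥ x = 0 := by
    simpa [Matrix.mulVec_add, Matrix.mulVec_mulVec, hQA, hQQ] using congrArg (Q *ᵥ ·) hx
  obtain ⟨y, hy⟩ : x ∈ LinearMap.range Q.mulVecLin := by
    rw [hrange, LinearMap.mem_ker, Matrix.mulVecLin_apply]
    simpa [hQx] using hx
  simp only [Matrix.mulVecLin_apply] at hy
  exact hx0 (by rw [← hy, ← hQQ, ← Matrix.mulVec_mulVec, hy, hQx])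

end Index

section Resolvent

variable {m : Type*} [Fintype m] [DecidableEq m] {A Q : Matrix m m ℝ}

theorem inv_one_add_inv_smul_eq (hQQ : Q * Q = Q) (hAQ : A * Q = 0) (hQA : Q * A = 0) {ε : ℝ}
    (hε : ε ≠ 0) (hεAQ : IsUnit (ε • 1 + (A + Q)).det) :
    (1 + ε⁻¹ • A)⁻¹ = Q + ε • ((1 - Q) * (ε • 1 + (A + Q))⁻¹) := by
  apply Matrix.inv_eq_right_inv
  have hcomm : (ε • 1 + A) * (1 - Q) = (1 - Q) * (ε • 1 + (A + Q)) := by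
    simp only [mul_sub, sub_mul, add_mul, mul_add, mul_one, one_mul, Matrix.smul_mul,
      Matrix.mul_smul, hAQ, hQA, hQQ]
    abel
  have hscale : 1 + ε⁻¹ • A = ε⁻¹ • (ε • 1 + A) := by
    rw [smul_add, smul_smul, inv_mul_cancel₀ hε, one_smul]
  rw [hscale, mul_add, Matrix.smul_mul, add_mul, Matrix.smul_mul, one_mul, hAQ, add_zero,
    smul_smul, inv_mul_cancel₀ hε, one_smul, Matrix.mul_smul, Matrix.smul_mul, smul_smul,
    mul_inv_cancel₀ hε, one_smul, ← mul_assoc, hcomm, mul_assoc, Matrix.mul_nonsing_inv _ hεAQ,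
    mul_one, add_sub_cancel]

theorem tendsto_inv_one_add_inv_smul (hQQ : Q * Q = Q) (hAQ : A * Q = 0) (hQA : Q * A = 0)
    (hdet : IsUnit (A + Q).det) :
    Tendsto (fun ε : ℝ => (1 + ε⁻¹ • A)⁻¹) (𝓝[≠] 0) (𝓝 Q) := by
  have hshift : Continuous fun ε : ℝ => ε • (1 : Matrix m m ℝ) + (A + Q) := by fun_prop
  have hinv : ContinuousAt (fun ε : ℝ => (ε • 1 + (A + Q))⁻¹) 0 := by
    refine ContinuousAt.comp (f := fun ε : ℝ => ε • 1 + (A + Q)) ?_ hshift.continuousAt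
    refine continuousAt_matrix_inv _ ?_
    simpa [Ring.inverse_eq_inv'] using continuousAt_inv₀ hdet.ne_zero
  have hlim :
      Tendsto (fun ε : ℝ => Q + ε • ((1 - Q) * (ε • 1 + (A + Q))⁻¹)) (𝓝 0) (𝓝 Q) := by
    simpa using tendsto_const_nhds.add (tendsto_id.smul (tendsto_const_nhds.mul hinv.tendsto))
  have hunit : ∀ᶠ ε in 𝓝 (0 : ℝ), IsUnit (ε • 1 + (A + Q)).det := by
    have hne := (hshift.matrix_det.tendsto 0).eventually_ne (by simpa using hdet.ne_zero)
    exact hne.mono fun ε => isUnit_iff_ne_zero.2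
  refine (hlim.mono_left nhdsWithin_le_nhds).congr' ?_
  filter_upwards [nhdsWithin_le_nhds hunit, self_mem_nhdsWithin] with ε hεu hε
  exact (inv_one_add_inv_smul_eq hQQ hAQ hQA hε hεu).symm

theorem tendsto_inv_one_add_inv_smul_of_isEigenprojection {J : Matrix m m ℝ}
    (h : LinearMap.ker (A * A).mulVecLin = LinearMap.ker A.mulVecLin)
    (hJ : IsEigenprojection A J) :
    Tendsto (fun ε : ℝ => (1 + ε⁻¹ • A)⁻¹) (𝓝[≠] 0) (𝓝 J) := by
  obtain ⟨hJJ, hrange, hker⟩ := (isEigenprojection_iff_of_ker_mul_self h).1 hJ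
  exact tendsto_inv_one_add_inv_smul hJJ (Matrix.mul_eq_zero_of_range_le_ker hrange.le)
    (Matrix.mul_eq_zero_of_range_le_ker hker.ge)
    (isUnit_det_add_of_range_eq_ker hJJ hrange hker)

end Resolvent

section RowStochastic

variable {m : Type*} [Fintype m] [DecidableEq m] {P : Matrix m m ℝ}

theorem abs_mulVec_le_of_mem_rowStochastic (hP : P ∈ Matrix.rowStochastic ℝ m) {z : m → ℝ}
    {C : ℝ} (hz : ∀ j, |z j| ≤ C) (i : m) : |(P *ᵥ z) i| ≤ C :=
  calc |(P *ᵥ z) i| = |∑ j, P i j * z j| := rfl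
    _ ≤ ∑ j, P i j * |z j| := (Finset.abs_sum_le_sum_abs _ _).trans_eq <| by
      simp [abs_mul, abs_of_nonneg (Matrix.nonneg_of_mem_rowStochastic hP)]
    _ ≤ ∑ j, P i j * C := Finset.sum_le_sum fun j _ =>
      mul_le_mul_of_nonneg_left (hz j) (Matrix.nonneg_of_mem_rowStochastic hP)
    _ = C := by rw [← Finset.sum_mul, Matrix.sum_row_of_mem_rowStochastic hP, one_mul]

/-- A row-stochastic matrix has no nontrivial Jordan block for the eigenvalue `1`. -/
theorem eq_zero_of_mulVec_eq_add_of_mem_rowStochastic (hP : P ∈ Matrix.rowStochastic ℝ m)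
    {x y : m → ℝ} (hx : P *ᵥ x = x + y) (hy : P *ᵥ y = y) : y = 0 := by
  set C := ∑ j, |x j|
  have hbounded : ∀ k : ℕ, ∀ i, |x i + k * y i| ≤ C := by
    intro k
    induction k with
    | zero =>
      simpa using fun i => Finset.single_le_sum (fun j _ => abs_nonneg (x j)) (Finset.mem_univ i)
    | succ k ih =>
      have hstep : P *ᵥ (x + (k : ℝ) • y) = x + ((k + 1 : ℕ) : ℝ) • y := by
        rw [Matrix.mulVec_add, Matrix.mulVec_smul, hx, hy]
        push_cast
        module
      intro i
      simpa [hstep] using abs_mulVec_le_of_mem_rowStochastic hP (z := x + (k : ℝ) • y) ih i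
  funext i
  by_contra hyi
  have hpos : 0 < |y i| := abs_pos.2 hyi
  obtain ⟨k, hk⟩ := exists_nat_gt ((C + |x i|) / |y i|)
  rw [div_lt_iff₀ hpos] at hk
  have hle := abs_sub_abs_le_abs_sub (k * y i) (-x i)
  simp only [abs_mul, Nat.abs_cast, abs_neg, sub_neg_eq_add, add_comm _ (x i)] at hle
  linarith [hbounded k i]

end RowStochastic

namespace IsLaplacian

variable {m : Type*} [Fintype m] {L : Matrix m m ℝ}

theorem mulVec_one (hL : IsLaplacian L) : L *ᵥ 1 = 0 :=
  funext fun i => by simpa [Matrix.mulVec, dotProduct] using hL.2 i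

theorem diag_eq_sum_erase [DecidableEq m] (hL : IsLaplacian L) (i : m) :
    L i i = ∑ j ∈ Finset.univ.erase i, -L i j := by
  have h := hL.2 i
  rw [← Finset.add_sum_erase _ _ (Finset.mem_univ i)] at h
  rw [Finset.sum_neg_distrib]
  linarith

theorem diag_nonneg [DecidableEq m] (hL : IsLaplacian L) (i : m) : 0 ≤ L i i :=
  hL.diag_eq_sum_erase i ▸ Finset.sum_nonneg fun j hj =>
    neg_nonneg.2 (hL.1 i j (Finset.ne_of_mem_erase hj).symm)

theorem isUnit_det_one_add_smul [DecidableEq m] (hL : IsLaplacian L) {ε : ℝ} (hε : 0 ≤ ε) :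
    IsUnit (1 + ε • L).det := by
  refine isUnit_iff_ne_zero.2 (det_ne_zero_of_sum_row_lt_diag fun i => ?_)
  have hoff : ∀ j ∈ Finset.univ.erase i, ‖(1 + ε • L) i j‖ = ε * -L i j := fun j hj => by
    have hji := Finset.ne_of_mem_erase hj
    rw [Matrix.add_apply, Matrix.one_apply_ne hji.symm, zero_add, Matrix.smul_apply,
      smul_eq_mul, Real.norm_eq_abs, abs_of_nonpos (mul_nonpos_of_nonneg_of_nonpos hε
        (hL.1 i j hji.symm))]
    ring
  rw [Finset.sum_congr rfl hoff, ← Finset.mul_sum, ← hL.diag_eq_sum_erase, Matrix.add_apply,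
    Matrix.one_apply_eq, Matrix.smul_apply, smul_eq_mul, Real.norm_eq_abs,
    abs_of_nonneg (by positivity [hL.diag_nonneg i])]
  linarith

theorem one_sub_smul_mem_rowStochastic [DecidableEq m] (hL : IsLaplacian L) {s : ℝ}
    (hs : 0 ≤ s) (hsL : ∀ i, s * L i i ≤ 1) : 1 - s • L ∈ Matrix.rowStochastic ℝ m := by
  refine Matrix.mem_rowStochastic.2 ⟨fun i j => ?_, ?_⟩
  · rcases eq_or_ne i j with rfl | hij
    · simpa using hsL i
    · simpa [Matrix.one_apply_ne hij] using mul_nonpos_of_nonneg_of_nonpos hs (hL.1 i j hij)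
  · rw [Matrix.sub_mulVec, Matrix.one_mulVec, Matrix.smul_mulVec, hL.mulVec_one, smul_zero,
      sub_zero]

theorem exists_one_sub_smul_mem_rowStochastic [DecidableEq m] (hL : IsLaplacian L) :
    ∃ s : ℝ, 0 < s ∧ 1 - s • L ∈ Matrix.rowStochastic ℝ m := by
  have htrace : 0 < 1 + L.trace := by
    have : 0 ≤ L.trace := Finset.sum_nonneg fun i _ => hL.diag_nonneg i
    linarith
  refine ⟨(1 + L.trace)⁻¹, inv_pos.2 htrace, hL.one_sub_smul_mem_rowStochastic
    (inv_pos.2 htrace).le fun i => ?_⟩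
  rw [inv_mul_le_iff₀ htrace, mul_one]
  have := Finset.single_le_sum (fun j _ => hL.diag_nonneg j) (Finset.mem_univ i)
  linarith [show L.trace = ∑ j, L j j from rfl]

theorem ker_mul_self [DecidableEq m] (hL : IsLaplacian L) :
    LinearMap.ker (L * L).mulVecLin = LinearMap.ker L.mulVecLin := by
  obtain ⟨s, hs, hP⟩ := hL.exists_one_sub_smul_mem_rowStochastic
  refine le_antisymm (fun x hx => ?_) <| by
    rw [Matrix.mulVecLin_mul]
    exact LinearMap.ker_le_ker_comp _ _
  rw [LinearMap.mem_ker, Matrix.mulVecLin_apply, ← Matrix.mulVec_mulVec] at hx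
  have hy := eq_zero_of_mulVec_eq_add_of_mem_rowStochastic hP (x := x) (y := -s • (L *ᵥ x))
    (by rw [Matrix.sub_mulVec, Matrix.one_mulVec, Matrix.smul_mulVec, neg_smul]; abel)
    (by rw [Matrix.sub_mulVec, Matrix.one_mulVec, Matrix.smul_mulVec, Matrix.mulVec_smul, hx,
      smul_zero, smul_zero, sub_zero])
  rw [LinearMap.mem_ker, Matrix.mulVecLin_apply]
  exact (smul_eq_zero.1 hy).resolve_left (neg_ne_zero.2 hs.ne')

end IsLaplacian

theorem IsLaplacian.isEigenprojection_add_smul_one_sub_vecMulVec {m : Type*} [Fintype m]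
    [DecidableEq m] {L : Matrix m m ℝ} (hL : IsLaplacian L) {v : m → ℝ} (hv : ∑ i, v i = 1)
    {δ : ℝ} (hδ : 0 < δ) :
    IsEigenprojection (L + δ • (1 - Matrix.vecMulVec (1 : m → ℝ) v))
      (Matrix.vecMulVec (1 : m → ℝ) (v ᵥ* (1 + δ⁻¹ • L)⁻¹)) := by
  set A := 1 + δ⁻¹ • L
  set D := 1 - Matrix.vecMulVec (1 : m → ℝ) v
  have hA : IsUnit A.det := hL.isUnit_det_one_add_smul (inv_nonneg.2 hδ.le)
  have hv1 : v ⬝ᵥ 1 = 1 := by simpa [dotProduct] using hv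
  have hDx : ∀ x, D *ᵥ x = x - (v ⬝ᵥ x) • 1 := fun x => by
    rw [Matrix.sub_mulVec, Matrix.one_mulVec, Matrix.vecMulVec_mulVec, op_smul_eq_smul]
  have hfactor : L + δ • D = δ • (A * D) := by
    have hLD : L * D = L := by
      rw [mul_sub, mul_one, Matrix.mul_vecMulVec, hL.mulVec_one, Matrix.zero_vecMulVec, sub_zero]
    rw [add_mul, one_mul, Matrix.smul_mul, hLD, smul_add, smul_smul, mul_inv_cancel₀ hδ.ne',
      one_smul, add_comm]
  have hA1 : A⁻¹ *ᵥ 1 = 1 := by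
    have hA1' : A *ᵥ 1 = 1 := by
      rw [Matrix.add_mulVec, Matrix.one_mulVec, Matrix.smul_mulVec, hL.mulVec_one, smul_zero,
        add_zero]
    rw [← hA1', Matrix.mulVec_mulVec, Matrix.nonsing_inv_mul _ hA, Matrix.one_mulVec, hA1']
  refine isEigenprojection_vecMulVec ?_ ?_ ?_
  · rw [← Matrix.dotProduct_mulVec, hA1, hv1]
  · rw [hfactor, Matrix.vecMul_smul, ← Matrix.vecMul_vecMul, Matrix.vecMul_vecMul v,
      Matrix.nonsing_inv_mul _ hA, Matrix.vecMul_one, Matrix.vecMul_sub, Matrix.vecMul_one,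
      Matrix.vecMul_vecMulVec, hv1, one_smul, sub_self, smul_zero]
  · ext x
    have hAinj := Matrix.mulVec_injective_iff_isUnit.2 ((Matrix.isUnit_iff_isUnit_det A).2 hA)
    rw [LinearMap.mem_ker, Matrix.mulVecLin_apply, hfactor, Matrix.smul_mulVec,
      smul_eq_zero_iff_right hδ.ne', ← Matrix.mulVec_mulVec, ← Matrix.mulVec_zero A,
      hAinj.eq_iff, hDx, sub_eq_zero, Submodule.mem_span_singleton]
    exact ⟨fun hx => ⟨_, hx.symm⟩, fun ⟨a, hx⟩ => by simp [← hx, hv1]⟩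

theorem eigenprojection_background_links_general {n : ℕ}
    (L J : Matrix (Fin n) (Fin n) ℝ)
    (hL : IsLaplacian L) (hJ : IsEigenprojection L J)
    (v : Fin n → ℝ) (hvsum : ∑ i, v i = 1)
    (δ : ℝ) (hδ : 0 < δ) :
    IsEigenprojection
      (L + δ • (1 - Matrix.vecMulVec (fun _ : Fin n => (1 : ℝ)) v))
      (Matrix.vecMulVec (fun _ : Fin n => (1 : ℝ)) (v ᵥ* (1 + δ⁻¹ • L)⁻¹)) ∧
    Tendsto
      (fun ε : ℝ =>
        Matrix.vecMulVec (fun _ : Fin n => (1 : ℝ)) (v ᵥ* (1 + ε⁻¹ • L)⁻¹))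
      (𝓝[>] 0)
      (𝓝 (Matrix.vecMulVec (fun _ : Fin n => (1 : ℝ)) (v ᵥ* J))) := by
  refine ⟨hL.isEigenprojection_add_smul_one_sub_vecMulVec hvsum hδ, ?_⟩
  have hcont : Continuous fun X : Matrix (Fin n) (Fin n) ℝ =>
      Matrix.vecMulVec (fun _ : Fin n => (1 : ℝ)) (v ᵥ* X) :=
    continuous_const.matrix_vecMulVec (continuous_const.matrix_vecMul continuous_id)
  exact (hcont.tendsto J).comp <|
    (tendsto_inv_one_add_inv_smul_of_isEigenprojection hL.ker_mul_self hJ).mono_left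
      (nhdsGT_le_nhdsNE 0)

/-- Background-links regularization: for a distribution vector `v`,
`V = 1vᵀ`, `D = I - V` and `δ > 0`, the eigenprojection of `L + δD` equals
`1·vᵀ(I + δ⁻¹L)⁻¹`, and it converges to `1·vᵀJ̄` as `δ → 0⁺`. -/
theorem eigenprojection_background_links {n : ℕ}
    (L J : Matrix (Fin n) (Fin n) ℝ)
    (hL : IsLaplacian L) (hJ : IsEigenprojection L J)
    (v : Fin n → ℝ) (hv : ∀ i, 0 ≤ v i) (hvsum : ∑ i, v i = 1)
    (δ : ℝ) (hδ : 0 < δ) :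
    IsEigenprojection
      (L + δ • (1 - Matrix.vecMulVec (fun _ : Fin n => (1 : ℝ)) v))
      (Matrix.vecMulVec (fun _ : Fin n => (1 : ℝ)) (v ᵥ* (1 + δ⁻¹ • L)⁻¹)) ∧
    Tendsto
      (fun ε : ℝ =>
        Matrix.vecMulVec (fun _ : Fin n => (1 : ℝ)) (v ᵥ* (1 + ε⁻¹ • L)⁻¹))
      (𝓝[>] 0)
      (𝓝 (Matrix.vecMulVec (fun _ : Fin n => (1 : ℝ)) (v ᵥ* J))) :=
  eigenprojection_background_links_general L J hL hJ v hvsum δ hδ
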